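/- arXiv:2505.19491 — 3 statements merged into one kernel-verified Lean document; each statement's English description precedes it below -/
import Mathlib

section
/- Suppose Z ≤ 1/e and n ≥ max{8e, 16·ln(1/Z)}. Then U(n) = g̃^{−1}(1) satisfies U(n) ≤ √(16·n·ln(1/Z)). -/
/-!
`g̃` is strictly increasing on `[0, ∞)`, so it suffices to show `g̃(x₀) ≥ 1` for
`x₀ = √(16 n ln(1/Z))`. At `x₀` the exponential factor is exactly `1/Z` and cancels `Z`,
leaving `√(n/8) · erf(√(2 ln(1/Z)))`. Since `ln(1/Z) ≥ 1` and `n ≥ 8e`, this is at least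
`e^{1/2} · erf 1 ≥ e^{1/2} · e^{-1/2} = 1`.
-/

noncomputable def erf (x : ℝ) : ℝ := ∫ s in (0:ℝ)..x, Real.exp (-(s ^ 2) / 2)

noncomputable def gtilde (n Z x : ℝ) : ℝ :=
  Real.sqrt (n / 8) * Z * erf (x / Real.sqrt (8 * n)) * Real.exp (x ^ 2 / (16 * n))

open Real Set MeasureTheory

lemma intervalIntegrable_exp_neg_sq_div_two (a b : ℝ) :
    IntervalIntegrable (fun s => exp (-(s ^ 2) / 2)) volume a b :=
  (continuous_exp.comp (by fun_prop)).intervalIntegrable a b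

lemma strictMono_erf : StrictMono erf := by
  intro a b hab
  have hsplit : erf a + ∫ s in a..b, exp (-(s ^ 2) / 2) = erf b :=
    intervalIntegral.integral_add_adjacent_intervals
      (intervalIntegrable_exp_neg_sq_div_two 0 a) (intervalIntegrable_exp_neg_sq_div_two a b)
  have hpos : 0 < ∫ s in a..b, exp (-(s ^ 2) / 2) :=
    intervalIntegral.intervalIntegral_pos_of_pos
      (intervalIntegrable_exp_neg_sq_div_two a b) (fun _ => exp_pos _) hab
  linarith

lemma erf_nonneg {x : ℝ} (hx : 0 ≤ x) : 0 ≤ erf x := by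
  simpa [erf] using strictMono_erf.monotone hx

lemma exp_neg_half_le_erf_one : exp (-1 / 2) ≤ erf 1 := by
  have h : (∫ _ in (0:ℝ)..1, exp (-1 / 2)) ≤ ∫ s in (0:ℝ)..1, exp (-(s ^ 2) / 2) := by
    refine intervalIntegral.integral_mono_on zero_le_one intervalIntegrable_const
      (intervalIntegrable_exp_neg_sq_div_two 0 1) fun s hs => exp_le_exp.mpr ?_
    nlinarith [hs.1, hs.2]
  simpa [erf] using h

lemma strictMonoOn_gtilde {n Z : ℝ} (hn : 0 < n) (hZ : 0 < Z) :
    StrictMonoOn (gtilde n Z) (Ici 0) := by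
  intro x hx y _ hxy
  have hc : 0 < √(8 * n) := sqrt_pos.mpr (by positivity)
  have herf : erf (x / √(8 * n)) < erf (y / √(8 * n)) :=
    strictMono_erf (div_lt_div_of_pos_right hxy hc)
  have herf_nonneg : 0 ≤ erf (x / √(8 * n)) := erf_nonneg (div_nonneg hx hc.le)
  unfold gtilde
  calc √(n / 8) * Z * erf (x / √(8 * n)) * exp (x ^ 2 / (16 * n))
      ≤ √(n / 8) * Z * erf (x / √(8 * n)) * exp (y ^ 2 / (16 * n)) := by gcongr
    _ < √(n / 8) * Z * erf (y / √(8 * n)) * exp (y ^ 2 / (16 * n)) := by gcongr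

lemma gtilde_sqrt_mul_log_inv {n Z : ℝ} (hn : 0 < n) (hZ0 : 0 < Z) (hZ1 : Z ≤ 1) :
    gtilde n Z √(16 * n * log (1 / Z)) = √(n / 8) * erf √(2 * log (1 / Z)) := by
  have hL : 0 ≤ log (1 / Z) := log_nonneg (by rw [le_div_iff₀ hZ0]; linarith)
  have harg : √(16 * n * log (1 / Z)) / √(8 * n) = √(2 * log (1 / Z)) := by
    rw [← sqrt_div' _ (by positivity)]
    congr 1
    field_simp
    ring
  have hexp : exp (√(16 * n * log (1 / Z)) ^ 2 / (16 * n)) = 1 / Z := by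
    rw [sq_sqrt (by positivity), mul_div_cancel_left₀ _ (by positivity),
      exp_log (by positivity)]
  rw [gtilde, harg, hexp]
  field_simp

lemma one_le_gtilde_sqrt_mul_log_inv {n Z : ℝ} (hn : 8 * exp 1 ≤ n) (hZ0 : 0 < Z)
    (hZ : Z ≤ 1 / exp 1) : 1 ≤ gtilde n Z √(16 * n * log (1 / Z)) := by
  have hL : 1 ≤ log (1 / Z) := by
    rw [le_log_iff_exp_le (by positivity), le_div_iff₀ hZ0, mul_comm,
      ← le_div_iff₀ (exp_pos 1)]
    exact hZ
  have hn8 : exp (1 / 2) ≤ √(n / 8) := by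
    rw [exp_half]
    exact sqrt_le_sqrt (by linarith)
  have herf : exp (-1 / 2) ≤ erf √(2 * log (1 / Z)) :=
    exp_neg_half_le_erf_one.trans
      (strictMono_erf.monotone (one_le_sqrt.mpr (by linarith)))
  rw [gtilde_sqrt_mul_log_inv (by linarith [exp_pos 1]) hZ0
    (hZ.trans (by rw [div_le_one (exp_pos 1)]; exact one_le_exp zero_le_one))]
  calc (1 : ℝ) = exp (1 / 2) * exp (-1 / 2) := by rw [← exp_add]; norm_num
    _ ≤ √(n / 8) * erf √(2 * log (1 / Z)) := by gcongr

theorem U_upper_bound_general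
    (n Z : ℝ) (hZpos : 0 < Z) (hZ : Z ≤ 1 / Real.exp 1)
    (hn : n ≥ max (8 * Real.exp 1) (16 * Real.log (1 / Z)))
    (U : ℝ) (hU1 : gtilde n Z U = 1) :
    U ≤ Real.sqrt (16 * n * Real.log (1 / Z)) := by
  have hn0 : 0 < n := by linarith [le_of_max_le_left hn, exp_pos 1]
  have hx₀ : 0 ≤ √(16 * n * log (1 / Z)) := sqrt_nonneg _
  by_contra! hU
  have hlt := strictMonoOn_gtilde hn0 hZpos hx₀ (hx₀.trans hU.le) hU
  linarith [one_le_gtilde_sqrt_mul_log_inv (le_of_max_le_left hn) hZpos hZ]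

/-- the threshold `U(n) = g̃⁻¹(1)` satisfies `U(n) ≤ √(16·n·ln(1/Z))`. -/
theorem U_upper_bound
    (n Z : ℝ) (hn1 : 1 ≤ n) (hZpos : 0 < Z) (hZ : Z ≤ 1 / Real.exp 1)
    (hn : n ≥ max (8 * Real.exp 1) (16 * Real.log (1 / Z)))
    (U : ℝ) (hU0 : 0 ≤ U) (hU1 : gtilde n Z U = 1) :
    U ≤ Real.sqrt (16 * n * Real.log (1 / Z)) :=
  U_upper_bound_general n Z hZpos hZ hn U hU1
end

section
/- Suppose Z > 0, n ≥ 1 and U(n) ≥ 8. Then g̃(U(n) − 8) ≤ exp((64 − 16·U(n))/(16·n)). -/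
open Real MeasureTheory

theorem erf_monotone : Monotone erf := by
  intro a b hab
  have hint : ∀ x y : ℝ, IntervalIntegrable (fun s : ℝ => exp (-(s ^ 2) / 2)) volume x y :=
    fun x y => (by fun_prop : Continuous fun s : ℝ => exp (-(s ^ 2) / 2)).intervalIntegrable x y
  have hsplit := intervalIntegral.integral_add_adjacent_intervals (hint 0 a) (hint a b)
  have hnonneg : 0 ≤ ∫ s in a..b, exp (-(s ^ 2) / 2) :=
    intervalIntegral.integral_nonneg hab fun s _ => (exp_pos _).le
  unfold erf
  linarith

theorem exp_sub_sq_div (x a c : ℝ) :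
    exp ((x - a) ^ 2 / c) = exp (x ^ 2 / c) * exp ((a ^ 2 - 2 * a * x) / c) := by
  rw [← exp_add, ← add_div]
  ring_nf

theorem gtilde_sub_le {Z a : ℝ} (n x : ℝ) (hZ : 0 ≤ Z) (ha : 0 ≤ a) :
    gtilde n Z (x - a) ≤ gtilde n Z x * exp ((a ^ 2 - 2 * a * x) / (16 * n)) := by
  have herf : erf ((x - a) / √(8 * n)) ≤ erf (x / √(8 * n)) :=
    erf_monotone (div_le_div_of_nonneg_right (by linarith) (sqrt_nonneg _))
  unfold gtilde
  rw [exp_sub_sq_div, ← mul_assoc]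
  gcongr

theorem gtilde_at_U_sub_eight_general
    (n Z : ℝ) (hZpos : 0 < Z)
    (U : ℝ) (hU1 : gtilde n Z U = 1) :
    gtilde n Z (U - 8) ≤ Real.exp ((64 - 16 * U) / (16 * n)) := by
  calc gtilde n Z (U - 8)
      ≤ gtilde n Z U * exp ((8 ^ 2 - 2 * 8 * U) / (16 * n)) :=
        gtilde_sub_le n U hZpos.le (by norm_num)
    _ = exp ((64 - 16 * U) / (16 * n)) := by rw [hU1, one_mul]; norm_num

/-- `g̃(U(n) − 8) ≤ exp((64 − 16·U(n))/(16·n))` whenever `U(n) ≥ 8`. -/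
theorem gtilde_at_U_sub_eight
    (n Z : ℝ) (hn1 : 1 ≤ n) (hZpos : 0 < Z)
    (U : ℝ) (hU0 : 0 ≤ U) (hU1 : gtilde n Z U = 1) (hU8 : 8 ≤ U) :
    gtilde n Z (U - 8) ≤ Real.exp ((64 - 16 * U) / (16 * n)) :=
  gtilde_at_U_sub_eight_general n Z hZpos U hU1
end

section
/- Let s_1,…,s_T be reals and 0 < λ_2 ≤ λ_1 < 1. Then (1−λ_1)·∑_{t=1}^T λ_1^{T−t}·s_t ≤ (1−λ_2)·max(0, max_{1≤j≤T} ∑_{t=1}^j λ_2^{j−t}·s_t). -/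
/-!
Write `A^λ_j = ∑_{t ≤ j} λ^{j-t} s_t`, so that `A^λ_{j+1} = λ A^λ_j + s_{j+1}`. The difference
`D_j = A^{λ₁}_j - A^{λ₂}_j` then satisfies `D_{j+1} = λ₁ D_j + (λ₁ - λ₂) A^{λ₂}_j`, and with
`A^{λ₂}_j ≤ M` this keeps `(1 - λ₁) D_j ≤ (λ₁ - λ₂) M` invariant. Adding `(1 - λ₁) A^{λ₂}_T ≤ (1 - λ₁) M`
gives `(1 - λ₁) A^{λ₁}_T ≤ (1 - λ₂) M`.
-/

open Finset

def discountedSum (l : ℝ) (s : ℕ → ℝ) (j : ℕ) : ℝ :=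
  ∑ t ∈ Icc 1 j, l ^ (j - t) * s t

@[simp]
lemma discountedSum_zero (l : ℝ) (s : ℕ → ℝ) : discountedSum l s 0 = 0 := by
  simp [discountedSum]

lemma discountedSum_succ (l : ℝ) (s : ℕ → ℝ) (j : ℕ) :
    discountedSum l s (j + 1) = l * discountedSum l s j + s (j + 1) := by
  rw [discountedSum, sum_Icc_succ_top (by omega), Nat.sub_self, pow_zero, one_mul,
    discountedSum, mul_sum]
  congr 1
  refine sum_congr rfl fun t ht => ?_
  rw [Nat.sub_add_comm (mem_Icc.1 ht).2, pow_succ]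
  ring

lemma one_sub_mul_discountedSum_sub_le {l1 l2 M : ℝ} {s : ℕ → ℝ} (hl1 : 0 ≤ l1) (hl1' : l1 ≤ 1)
    (hl21 : l2 ≤ l1) (hM : 0 ≤ M) {T : ℕ} (hsM : ∀ j < T, discountedSum l2 s j ≤ M) :
    (1 - l1) * (discountedSum l1 s T - discountedSum l2 s T) ≤ (l1 - l2) * M := by
  induction T with
  | zero => simpa using mul_nonneg (sub_nonneg.2 hl21) hM
  | succ T ih =>
    have hD := ih fun j hj => hsM j (by omega)
    have hA := mul_le_mul_of_nonneg_left (hsM T (by omega))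
      (mul_nonneg (sub_nonneg.2 hl1') (sub_nonneg.2 hl21))
    rw [discountedSum_succ, discountedSum_succ]
    nlinarith [mul_le_mul_of_nonneg_left hD hl1]

lemma one_sub_mul_discountedSum_le {l1 l2 M : ℝ} {s : ℕ → ℝ} (hl1 : 0 ≤ l1) (hl1' : l1 ≤ 1)
    (hl21 : l2 ≤ l1) (hM : 0 ≤ M) {T : ℕ} (hsM : ∀ j ≤ T, discountedSum l2 s j ≤ M) :
    (1 - l1) * discountedSum l1 s T ≤ (1 - l2) * M := by
  have hD := one_sub_mul_discountedSum_sub_le hl1 hl1' hl21 hM fun j hj => hsM j hj.le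
  have hA := mul_le_mul_of_nonneg_left (hsM T le_rfl) (sub_nonneg.2 hl1')
  linarith

/-- the `λ₁`-smoothed sum is bounded by the `λ₂` normalization
times the nonnegative part of the maximal `λ₂`-discounted sum over times `j ≤ T`. -/
theorem smoothed_sum_le_max_discounted
    (T : ℕ) (hT : 1 ≤ T) (s : ℕ → ℝ)
    (l1 l2 : ℝ) (hl2 : 0 < l2) (hl21 : l2 ≤ l1) (hl1 : l1 < 1) :
    (1 - l1) * ∑ t ∈ Finset.Icc 1 T, l1 ^ (T - t) * s t ≤
      (1 - l2) * max 0
        ((Finset.Icc 1 T).sup' (Finset.nonempty_Icc.2 hT)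
          (fun j => ∑ t ∈ Finset.Icc 1 j, l2 ^ (j - t) * s t)) := by
  change (1 - l1) * discountedSum l1 s T ≤
    (1 - l2) * max 0 ((Icc 1 T).sup' (nonempty_Icc.2 hT) (discountedSum l2 s))
  refine one_sub_mul_discountedSum_le (hl2.le.trans hl21) hl1.le hl21 (le_max_left _ _)
    fun j hj => ?_
  rcases Nat.eq_zero_or_pos j with rfl | hj0
  · simp
  · exact (le_sup' (discountedSum l2 s) (mem_Icc.2 ⟨hj0, hj⟩)).trans (le_max_right _ _)
end
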